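/- Let n1, n2 ≥ 1 be integers. Suppose each arm i has 2 n_i binary observations split evenly into training and validation halves, with training means a1, a2 ∈ [0, 1] (a1 ≠ a2), validation means ν1, ν2 ∈ [0, 1] (ν1 ≠ ν2), and full-sample difference Δ = (Δ_tr + Δ_val)/2 > 0, where Δ_tr = a1 − a2 and Δ_val = ν1 − ν2. Let p = (n1·a1 + n2·a2)/(n1 + n2) and assume p ∈ (0, 1), and define L(δ) = (1/(n1 + n2)) · [ n1·ℓ(ν1, p + δ) + n2·ℓ(ν2, p − (n1/n2)·δ) ]. Then there exists η0 > 0 such that for all η ∈ (0, η0): L(η·(a1 − p)) < L(0) if and only if 0 < Δ_tr < 2Δ. (This is the full equivalence (1) ⟺ (3) of Proposition 1: Tree_1 is accepted by early stopping exactly when the training difference lies in (0, 2Δ).) -/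

import Mathlib

/-!
Along the first boosting step the validation loss moves in the direction
`a1 - p = n2 / (n1 + n2) * Δtr`, and its derivative there is
`-(n1 n2 / ((n1 + n2)² p (1 - p))) * Δtr * Δval`, which is nonzero.  So for small `η` the loss
decreases exactly when `Δtr * Δval > 0`, and since `Δtr + Δval = 2Δ > 0` this means
`0 < Δtr < 2Δ`.
-/

/-- The binary-outcome log loss of a constant prediction `p ∈ (0,1)`
against a target mean `ν ∈ [0,1]`. -/
noncomputable def logLoss (ν p : ℝ) : ℝ :=
  -ν * Real.log p - (1 - ν) * Real.log (1 - p)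

open Filter Topology Set

namespace HasDerivAt

variable {f : ℝ → ℝ} {f' x : ℝ}

lemma eventually_nhdsGT_lt (hf : HasDerivAt f f' x) (hf' : f' < 0) :
    ∀ᶠ y in 𝓝[>] x, f y < f x := by
  have hslope : Tendsto (slope f x) (𝓝[>] x) (𝓝 f') :=
    (hasDerivAt_iff_tendsto_slope.mp hf).mono_left
      (nhdsWithin_mono _ fun _ hy => ne_of_gt hy)
  filter_upwards [hslope (Iio_mem_nhds hf'), self_mem_nhdsWithin] with y hy hxy
  rw [mem_preimage, mem_Iio, slope_def_field] at hy
  exact sub_neg.mp (neg_of_div_neg_left hy (sub_pos.mpr hxy).le)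

lemma eventually_nhdsGT_lt_iff (hf : HasDerivAt f f' x) (hf' : f' ≠ 0) :
    ∀ᶠ y in 𝓝[>] x, (f y < f x ↔ f' < 0) := by
  rcases hf'.lt_or_gt with hneg | hpos
  · filter_upwards [hf.eventually_nhdsGT_lt hneg] with y hy
    exact iff_of_true hy hneg
  · filter_upwards [hf.neg.eventually_nhdsGT_lt (neg_neg_of_pos hpos)] with y hy
    exact iff_of_false (neg_lt_neg_iff.mp hy).asymm hpos.asymm

end HasDerivAt

lemma hasDerivAt_logLoss (ν : ℝ) {p : ℝ} (hp0 : p ≠ 0) (hp1 : p ≠ 1) :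
    HasDerivAt (logLoss ν) ((p - ν) / (p * (1 - p))) p := by
  have h1p : 1 - p ≠ 0 := sub_ne_zero.mpr hp1.symm
  have hlog : HasDerivAt (fun q => Real.log (1 - q)) (-1 / (1 - p)) p := by
    simpa using ((hasDerivAt_id p).const_sub 1).log h1p
  refine (((Real.hasDerivAt_log hp0).const_mul (-ν)).sub (hlog.const_mul (1 - ν))).congr_deriv ?_
  field_simp
  ring

/-- The slopes `(p - νᵢ) / (p (1 - p))` of the two losses share the term in `p`, which cancels
because the shift `(δ, -(w₁/w₂) δ)` keeps the `w`-weighted mean prediction at `p`. -/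
lemma hasDerivAt_weighted_logLoss_zero {w₁ w₂ : ℝ} (hw₂ : w₂ ≠ 0) (c ν₁ ν₂ : ℝ) {p : ℝ}
    (hp0 : p ≠ 0) (hp1 : p ≠ 1) :
    HasDerivAt (fun δ => c * (w₁ * logLoss ν₁ (p + δ) + w₂ * logLoss ν₂ (p - w₁ / w₂ * δ)))
      (c * w₁ * (ν₂ - ν₁) / (p * (1 - p))) 0 := by
  have h₁ : HasDerivAt (fun δ => logLoss ν₁ (p + δ)) ((p - ν₁) / (p * (1 - p))) 0 := by
    refine HasDerivAt.comp_const_add p 0 ?_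
    simpa using hasDerivAt_logLoss ν₁ hp0 hp1
  have h₂ : HasDerivAt (fun δ => logLoss ν₂ (p - w₁ / w₂ * δ))
      ((p - ν₂) / (p * (1 - p)) * -(w₁ / w₂)) 0 := by
    have hlin : HasDerivAt (fun δ : ℝ => p - w₁ / w₂ * δ) (-(w₁ / w₂)) 0 := by
      simpa using ((hasDerivAt_id (0 : ℝ)).const_mul (w₁ / w₂)).const_sub p
    exact (hasDerivAt_logLoss ν₂ hp0 hp1).comp_of_eq (0 : ℝ) hlin (by simp)
  refine (((h₁.const_mul w₁).add (h₂.const_mul w₂)).const_mul c).congr_deriv ?_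
  field_simp
  ring

lemma sub_weighted_average_eq {K : Type*} [Field K] (w₁ w₂ a₁ a₂ : K) (hw : w₁ + w₂ ≠ 0) :
    a₁ - (w₁ * a₁ + w₂ * a₂) / (w₁ + w₂) = w₂ / (w₁ + w₂) * (a₁ - a₂) := by
  field_simp
  ring

lemma mul_pos_iff_of_add_pos {R : Type*} [Ring R] [LinearOrder R] [IsStrictOrderedRing R]
    {x y : R} (h : 0 < x + y) : 0 < x * y ↔ 0 < x ∧ x < x + y := by
  rw [lt_add_iff_pos_right, mul_pos_iff, or_iff_left]
  rintro ⟨hx, hy⟩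
  exact (add_neg hx hy).not_gt h

theorem tree1_accepted_iff_trainingDiff_in_interval_general
    (n1 n2 : ℕ) (hn1 : 1 ≤ n1) (hn2 : 1 ≤ n2)
    (a1 a2 ν1 ν2 : ℝ)
    (hane : a1 ≠ a2)
    (hνne : ν1 ≠ ν2)
    (Δtr Δval Δ : ℝ)
    (hΔtr : Δtr = a1 - a2) (hΔval : Δval = ν1 - ν2)
    (hΔ : Δ = (Δtr + Δval) / 2) (hΔpos : 0 < Δ)
    (p : ℝ) (hpdef : p = ((n1 : ℝ) * a1 + (n2 : ℝ) * a2) / ((n1 : ℝ) + (n2 : ℝ)))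
    (hp : p ∈ Set.Ioo (0 : ℝ) 1)
    (L : ℝ → ℝ)
    (hL : ∀ δ : ℝ, L δ = (1 / ((n1 : ℝ) + (n2 : ℝ))) *
      ((n1 : ℝ) * logLoss ν1 (p + δ)
        + (n2 : ℝ) * logLoss ν2 (p - ((n1 : ℝ) / (n2 : ℝ)) * δ))) :
    ∃ η0 > (0 : ℝ), ∀ η ∈ Set.Ioo (0 : ℝ) η0,
      (L (η * (a1 - p)) < L 0 ↔ (0 < Δtr ∧ Δtr < 2 * Δ)) := by
  have hn1pos : (0 : ℝ) < n1 := by exact_mod_cast hn1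
  have hn2pos : (0 : ℝ) < n2 := by exact_mod_cast hn2
  have hNpos : (0 : ℝ) < n1 + n2 := add_pos hn1pos hn2pos
  set K : ℝ := n1 * n2 / ((n1 + n2) ^ 2 * (p * (1 - p))) with hK
  have hKpos : 0 < K := by have := mul_pos hp.1 (sub_pos.mpr hp.2); positivity
  have hres : a1 - p = n2 / (n1 + n2) * Δtr := by
    rw [hpdef, hΔtr]; exact sub_weighted_average_eq _ _ _ _ hNpos.ne'
  have hderiv : HasDerivAt (fun η => L (η * (a1 - p))) (-K * (Δtr * Δval)) 0 := by
    have hlin : HasDerivAt (fun η : ℝ => η * (a1 - p)) (a1 - p) 0 := by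
      simpa using (hasDerivAt_id (0 : ℝ)).mul_const (a1 - p)
    simp only [hL]
    refine ((hasDerivAt_weighted_logLoss_zero hn2pos.ne' _ ν1 ν2 hp.1.ne' hp.2.ne).comp_of_eq
      0 hlin (zero_mul _).symm).congr_deriv ?_
    rw [hres, hK, hΔval]
    field_simp
    ring
  have hD : -K * (Δtr * Δval) ≠ 0 :=
    mul_ne_zero (neg_ne_zero.mpr hKpos.ne')
      (mul_ne_zero (hΔtr ▸ sub_ne_zero.mpr hane) (hΔval ▸ sub_ne_zero.mpr hνne))
  obtain ⟨η0, hη0, hsub⟩ :=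
    mem_nhdsGT_iff_exists_Ioo_subset.mp (hderiv.eventually_nhdsGT_lt_iff hD)
  refine ⟨η0, hη0, fun η hη => ?_⟩
  have hsign : -K * (Δtr * Δval) < 0 ↔ 0 < Δtr ∧ Δtr < 2 * Δ := by
    rw [neg_mul, neg_lt_zero, mul_pos_iff_of_pos_left hKpos,
      show 2 * Δ = Δtr + Δval by rw [hΔ]; ring]
    exact mul_pos_iff_of_add_pos (by linarith)
  rw [← hsign]
  simpa using hsub hη

/-- Full equivalence (1) ⟺ (3) of Proposition 1: for sufficiently small learning rate,
`Tree_1` is accepted by early stopping (the updated ensemble strictly reduces the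
validation log loss) exactly when the training difference `Δ_tr` lies in `(0, 2Δ)`,
where `Δ = (Δ_tr + Δ_val)/2 > 0`. -/
theorem tree1_accepted_iff_trainingDiff_in_interval
    (n1 n2 : ℕ) (hn1 : 1 ≤ n1) (hn2 : 1 ≤ n2)
    (a1 a2 ν1 ν2 : ℝ)
    (ha1 : a1 ∈ Set.Icc (0 : ℝ) 1) (ha2 : a2 ∈ Set.Icc (0 : ℝ) 1) (hane : a1 ≠ a2)
    (hν1 : ν1 ∈ Set.Icc (0 : ℝ) 1) (hν2 : ν2 ∈ Set.Icc (0 : ℝ) 1) (hνne : ν1 ≠ ν2)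
    (Δtr Δval Δ : ℝ)
    (hΔtr : Δtr = a1 - a2) (hΔval : Δval = ν1 - ν2)
    (hΔ : Δ = (Δtr + Δval) / 2) (hΔpos : 0 < Δ)
    (p : ℝ) (hpdef : p = ((n1 : ℝ) * a1 + (n2 : ℝ) * a2) / ((n1 : ℝ) + (n2 : ℝ)))
    (hp : p ∈ Set.Ioo (0 : ℝ) 1)
    (L : ℝ → ℝ)
    (hL : ∀ δ : ℝ, L δ = (1 / ((n1 : ℝ) + (n2 : ℝ))) *
      ((n1 : ℝ) * logLoss ν1 (p + δ)
        + (n2 : ℝ) * logLoss ν2 (p - ((n1 : ℝ) / (n2 : ℝ)) * δ))) :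
    ∃ η0 > (0 : ℝ), ∀ η ∈ Set.Ioo (0 : ℝ) η0,
      (L (η * (a1 - p)) < L 0 ↔ (0 < Δtr ∧ Δtr < 2 * Δ)) :=
  tree1_accepted_iff_trainingDiff_in_interval_general n1 n2 hn1 hn2 a1 a2 ν1 ν2 hane hνne Δtr Δval Δ
    hΔtr hΔval hΔ hΔpos p hpdef hp L hL
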